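/- arXiv:2009.13314 — 4 statements merged into one kernel-verified Lean document; each statement's English description precedes it below -/
import Mathlib

section
/- Let A be an irreducible nonnegative real square matrix with spectral radius 1, realized as a simple positive eigenvalue (Perron–Frobenius eigenvalue) equal to 1. Define p(t) = det(I - tA). Then p(1) = 0 and p'(1) < 0. -/
/-!
`p(t) = ∏ᵢ (1 - t λᵢ)` has no zero on `[0, 1)` because `‖t λᵢ‖ < 1` there, so the real function
`p`, with `p 0 = 1`, stays positive on `[0, 1)`; since `p 1 = 0`, this forces `p' 1 ≤ 0`.
On the other hand `1` is a simple root of the product, so `p' 1 = -∏_{i ≠ 0} (1 - λᵢ) ≠ 0`.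
-/

open Filter Finset Topology

theorem IsPreconnected.pos_of_forall_ne_zero {α : Type*} [TopologicalSpace α] {s : Set α}
    {f : α → ℝ} (hs : IsPreconnected s) (hf : ContinuousOn f s) {a : α} (ha : a ∈ s)
    (hfa : 0 < f a) (hne : ∀ y ∈ s, f y ≠ 0) {x : α} (hx : x ∈ s) : 0 < f x := by
  by_contra! hfx
  obtain ⟨y, hy, hfy⟩ := hs.intermediate_value hx ha hf ⟨hfx, hfa.le⟩
  exact hne y hy hfy

theorem HasDerivAt.nonpos_of_eq_zero_of_nonneg_left {f : ℝ → ℝ} {f' x : ℝ}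
    (hf : HasDerivAt f f' x) (hfx : f x = 0) (hleft : ∀ᶠ t in 𝓝[<] x, 0 ≤ f t) : f' ≤ 0 := by
  refine le_of_tendsto (hasDerivAt_iff_tendsto_slope_left_right.1 hf).1 ?_
  filter_upwards [hleft, self_mem_nhdsWithin] with t ht htx
  rw [slope_def_field, hfx, sub_zero]
  exact div_nonpos_of_nonneg_of_nonpos ht (sub_nonpos.2 (le_of_lt htx))

theorem HasDerivAt.exists_ofReal_eq {p : ℝ → ℝ} {D : ℂ} {x : ℝ}
    (h : HasDerivAt (fun t => (p t : ℂ)) D x) : ∃ d : ℝ, HasDerivAt p d x ∧ (d : ℂ) = D := by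
  have hre : HasDerivAt p D.re x := Complex.reCLM.hasFDerivAt.comp_hasDerivAt x h
  exact ⟨D.re, hre, hre.ofReal_comp.unique h⟩

theorem prod_one_sub_mul_ne_zero {ι 𝕜 : Type*} [NormedField 𝕜] {s : Finset ι}
    {μ : ι → 𝕜} (hμ : ∀ i ∈ s, ‖μ i‖ ≤ 1) {z : 𝕜} (hz : ‖z‖ < 1) :
    ∏ i ∈ s, (1 - z * μ i) ≠ 0 := by
  refine prod_ne_zero_iff.2 fun i hi h => ?_
  have hnorm : ‖z * μ i‖ < 1 := by
    rw [norm_mul]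
    exact lt_of_le_of_lt (mul_le_of_le_one_right (norm_nonneg z) (hμ i hi)) hz
  rw [← eq_of_sub_eq_zero h, norm_one] at hnorm
  exact lt_irrefl 1 hnorm

theorem hasDerivAt_prod_one_sub_mul_of_eq_one {ι : Type*} [DecidableEq ι] {s : Finset ι}
    {μ : ι → ℂ} {i₀ : ι} (hi₀ : i₀ ∈ s) (hμ : μ i₀ = 1) :
    HasDerivAt (fun t : ℝ => ∏ i ∈ s, (1 - (t : ℂ) * μ i)) (-∏ i ∈ s.erase i₀, (1 - μ i)) 1 := by
  set g : ℝ → ℂ := fun t => ∏ i ∈ s.erase i₀, (1 - (t : ℂ) * μ i)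
  have hsplit : (fun t : ℝ => ∏ i ∈ s, (1 - (t : ℂ) * μ i)) = fun t : ℝ => (1 - (t : ℂ)) * g t := by
    funext t
    rw [← mul_prod_erase s _ hi₀, hμ, mul_one]
  have hlin : HasDerivAt (fun t : ℝ => 1 - (t : ℂ)) (-1) 1 := by
    simpa using (Complex.ofRealCLM.hasDerivAt (x := (1 : ℝ))).const_sub 1
  have hg : HasDerivAt g (deriv g 1) 1 := DifferentiableAt.hasDerivAt (by fun_prop)
  rw [hsplit]
  exact (hlin.fun_mul hg).congr_deriv (by simp [g])

theorem perron_frobenius_det_deriv_general (n : ℕ) (hn : 1 ≤ n)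
    (A : Matrix (Fin n) (Fin n) ℝ)
    (lam : Fin n → ℂ) (hlam0 : lam ⟨0, hn⟩ = 1)
    (hlam : ∀ i : Fin n, i ≠ ⟨0, hn⟩ → ‖lam i‖ ≤ 1 ∧ lam i ≠ 1)
    (hfact : ∀ t : ℝ, ((Matrix.det (1 - t • A) : ℝ) : ℂ) = ∏ i, (1 - (t : ℂ) * lam i)) :
    (fun t : ℝ => Matrix.det (1 - t • A)) 1 = 0 ∧
      deriv (fun t : ℝ => Matrix.det (1 - t • A)) 1 < 0 := by
  have hnorm : ∀ i ∈ univ, ‖lam i‖ ≤ 1 := fun i _ =>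
    if h : i = ⟨0, hn⟩ then by simp [h, hlam0] else (hlam i h).1
  have hp1 : (1 - (1 : ℝ) • A).det = 0 := by
    exact_mod_cast (hfact 1).trans (prod_eq_zero (mem_univ ⟨0, hn⟩) (by simp [hlam0]))
  obtain ⟨d, hd, hdD⟩ := HasDerivAt.exists_ofReal_eq
    ((funext hfact).symm ▸ hasDerivAt_prod_one_sub_mul_of_eq_one (mem_univ _) hlam0)
  have hd0 : d ≠ 0 := by
    rw [← Complex.ofReal_ne_zero, hdD, neg_ne_zero, prod_ne_zero_iff]
    exact fun j hj => sub_ne_zero.2 (hlam j (ne_of_mem_erase hj)).2.symm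
  have hpos : ∀ t ∈ Set.Ico (0 : ℝ) 1, 0 < (1 - t • A).det := by
    refine fun t ht => isPreconnected_Ico.pos_of_forall_ne_zero
      (f := fun t : ℝ => (1 - t • A).det) (by fun_prop) (Set.left_mem_Ico.2 one_pos) (by simp)
      (fun s hs => ?_) ht
    have hs' : ‖(s : ℂ)‖ < 1 := by
      rw [Complex.norm_real, Real.norm_of_nonneg hs.1]
      exact hs.2
    exact_mod_cast (hfact s).trans_ne (prod_one_sub_mul_ne_zero hnorm hs')
  have hle : d ≤ 0 := hd.nonpos_of_eq_zero_of_nonneg_left hp1 <| by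
    filter_upwards [Ioo_mem_nhdsLT one_pos] with t ht
    exact (hpos t (Set.Ioo_subset_Ico_self ht)).le
  exact ⟨hp1, hd.deriv ▸ hle.lt_of_ne hd0⟩

/-- Let `A` be an irreducible nonnegative real matrix with Perron–Frobenius
eigenvalue `1`: its complex eigenvalues `λ 0 = 1, λ 1, …` satisfy `‖λ i‖ ≤ 1`
and `λ i ≠ 1` for `i ≠ 0`, and `det(I - tA) = ∏ (1 - t λᵢ)`.  Then
`p(t) = det(I - tA)` satisfies `p(1) = 0` and `p'(1) < 0`. -/
theorem perron_frobenius_det_deriv (n : ℕ) (hn : 1 ≤ n)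
    (A : Matrix (Fin n) (Fin n) ℝ) (hA : ∀ i j, 0 ≤ A i j)
    (lam : Fin n → ℂ) (hlam0 : lam ⟨0, hn⟩ = 1)
    (hlam : ∀ i : Fin n, i ≠ ⟨0, hn⟩ → ‖lam i‖ ≤ 1 ∧ lam i ≠ 1)
    (hfact : ∀ t : ℝ, ((Matrix.det (1 - t • A) : ℝ) : ℂ) = ∏ i, (1 - (t : ℂ) * lam i)) :
    (fun t : ℝ => Matrix.det (1 - t • A)) 1 = 0 ∧
      deriv (fun t : ℝ => Matrix.det (1 - t • A)) 1 < 0 :=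
  perron_frobenius_det_deriv_general n hn A lam hlam0 hlam hfact
end

section
/- For every r ≥ 2 and every ℓ = (ℓ¹,...,ℓʳ) ∈ ℝ^r, det(I - Ā_{r,ℓ}) = ∑_{S ⊆ [r]} (1 - 2|S|) exp(-∑_{i∈S} ℓⁱ), where Ā_{r,ℓ} is the r×r matrix with entries Ā_{r,ℓ}(i,j) = exp(-ℓⁱ)(2 - δ(i,j)). -/
/-!
With `xᵢ = e^{-ℓⁱ}`, the matrix `I - Ā` is `diag(1 + x) - 2 x 𝟙ᵀ`, a diagonal matrix plus a rank-one
matrix. The matrix determinant lemma gives `∏ᵢ (1 + xᵢ) - 2 ∑ⱼ xⱼ ∏_{i ≠ j} (1 + xᵢ)`, and expanding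
the products over subsets `S` yields the right-hand side: the second sum picks up `∏_{i ∈ S} xᵢ`
once for every `j ∈ S`, whence the weight `|S|`.
-/

open Finset Matrix

theorem Finset.sum_filter_mem_powerset_eq_sum_insert {ι M : Type*} [DecidableEq ι]
    [AddCommMonoid M] {s : Finset ι} {j : ι} (hj : j ∈ s) (f : Finset ι → M) :
    ∑ t ∈ s.powerset with j ∈ t, f t = ∑ t ∈ (s.erase j).powerset, f (insert j t) := by
  refine sum_nbij' (fun t => t.erase j) (insert j) ?_ ?_ ?_ ?_ ?_
  · intro t ht
    simp only [mem_filter, mem_powerset] at ht ⊢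
    exact erase_subset_erase j ht.1
  · intro t ht
    simp only [mem_filter, mem_powerset] at ht ⊢
    exact ⟨insert_subset hj (ht.trans (erase_subset j s)), mem_insert_self j t⟩
  · intro t ht
    simp only [mem_filter] at ht
    exact insert_erase ht.2
  · intro t ht
    simp only [mem_powerset] at ht
    exact erase_insert fun h => by simpa using ht h
  · intro t ht
    simp only [mem_filter] at ht
    rw [insert_erase ht.2]

theorem Finset.sum_powerset_card_mul_prod {ι R : Type*} [DecidableEq ι] [CommSemiring R]
    (s : Finset ι) (x : ι → R) :
    ∑ t ∈ s.powerset, (#t : R) * ∏ i ∈ t, x i = ∑ j ∈ s, x j * ∏ i ∈ s.erase j, (1 + x i) := by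
  calc ∑ t ∈ s.powerset, (#t : R) * ∏ i ∈ t, x i
      = ∑ t ∈ s.powerset, ∑ j ∈ t, ∏ i ∈ t, x i := by simp [sum_const, nsmul_eq_mul]
    _ = ∑ j ∈ s, ∑ t ∈ s.powerset with j ∈ t, ∏ i ∈ t, x i :=
        sum_comm' (by aesop)
    _ = ∑ j ∈ s, x j * ∏ i ∈ s.erase j, (1 + x i) := by
        refine sum_congr rfl fun j hj => ?_
        rw [sum_filter_mem_powerset_eq_sum_insert hj, prod_one_add, mul_sum]
        refine sum_congr rfl fun t ht => prod_insert fun h => ?_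
        simpa using mem_powerset.mp ht h

theorem Matrix.det_diagonal_add_replicateCol_mul_replicateRow {n K : Type*} [Fintype n]
    [DecidableEq n] [Field K] {d : n → K} (hd : ∀ i, d i ≠ 0) (u v : n → K) :
    (diagonal d + replicateCol Unit u * replicateRow Unit v).det =
      ∏ i, d i + ∑ j, v j * u j * ∏ i ∈ univ.erase j, d i := by
  have hfactor : diagonal d + replicateCol Unit u * replicateRow Unit v =
      diagonal d * (1 + replicateCol Unit (fun i => u i / d i) * replicateRow Unit v) := by
    rw [Matrix.mul_add, Matrix.mul_one, ← Matrix.mul_assoc]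
    congr 2
    ext i
    simp [diagonal_mul, mul_div_cancel₀ _ (hd i)]
  rw [hfactor, det_mul, det_diagonal, det_one_add_replicateCol_mul_replicateRow, mul_add,
    mul_one, dotProduct, mul_sum]
  congr 1
  refine sum_congr rfl fun j _ => ?_
  rw [← mul_prod_erase _ _ (mem_univ j)]
  field_simp [hd j]

theorem Finset.sum_powerset_one_sub_two_mul_card_mul_prod {ι R : Type*} [DecidableEq ι]
    [CommRing R] (s : Finset ι) (x : ι → R) :
    ∑ t ∈ s.powerset, (1 - 2 * (#t : R)) * ∏ i ∈ t, x i =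
      ∏ i ∈ s, (1 + x i) - 2 * ∑ j ∈ s, x j * ∏ i ∈ s.erase j, (1 + x i) := by
  simp only [sub_mul, one_mul, mul_assoc, sum_sub_distrib, ← mul_sum,
    sum_powerset_card_mul_prod, prod_one_add]

theorem det_rose_matrix_general (r : ℕ) (ℓ : Fin r → ℝ) :
    Matrix.det
        (1 - Matrix.of fun i j : Fin r =>
          Real.exp (-ℓ i) * (2 - if i = j then 1 else 0)) =
      ∑ S : Finset (Fin r), (1 - 2 * (S.card : ℝ)) * Real.exp (-(∑ i ∈ S, ℓ i)) := by
  set x : Fin r → ℝ := fun i => Real.exp (-ℓ i)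
  have hmatrix : (1 - Matrix.of fun i j : Fin r => x i * (2 - if i = j then 1 else 0)) =
      diagonal (fun i => 1 + x i) +
        replicateCol Unit (fun i => -2 * x i) * replicateRow Unit (fun _ => (1 : ℝ)) := by
    ext i j
    by_cases hij : i = j <;> simp [hij, one_apply, Matrix.mul_apply] <;> ring
  have hexp : ∀ S : Finset (Fin r), Real.exp (-(∑ i ∈ S, ℓ i)) = ∏ i ∈ S, x i := fun S => by
    rw [← sum_neg_distrib, Real.exp_sum]
  calc _ = ∏ i, (1 + x i) + ∑ j, 1 * (-2 * x j) * ∏ i ∈ univ.erase j, (1 + x i) := by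
        rw [hmatrix, det_diagonal_add_replicateCol_mul_replicateRow (fun i => by positivity)]
    _ = ∑ S ∈ univ.powerset, (1 - 2 * (S.card : ℝ)) * ∏ i ∈ S, x i := by
        rw [sum_powerset_one_sub_two_mul_card_mul_prod, mul_sum]
        simp only [one_mul, neg_mul, mul_assoc, sum_neg_distrib, sub_eq_add_neg]
    _ = _ := by simp only [powerset_univ, hexp]

/-- For `r ≥ 2` and `ℓ ∈ ℝ^r`, `det(I - Ā_{r,ℓ}) = ∑_{S ⊆ [r]} (1-2|S|) e^{-ℓ^S}`
where `Ā_{r,ℓ}(i,j) = e^{-ℓⁱ}(2 - δᵢⱼ)`. -/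
theorem det_rose_matrix (r : ℕ) (hr : 2 ≤ r) (ℓ : Fin r → ℝ) :
    Matrix.det
        (1 - Matrix.of fun i j : Fin r =>
          Real.exp (-ℓ i) * (2 - if i = j then 1 else 0)) =
      ∑ S : Finset (Fin r), (1 - 2 * (S.card : ℝ)) * Real.exp (-(∑ i ∈ S, ℓ i)) :=
  det_rose_matrix_general r ℓ
end

section
/- Let r ≥ 2, i ∈ [r], and ℓ ∈ (0,∞)^r with F̄_r(ℓ) = 0. Then 0 < X_i(ℓ) < 1 and 1 < Y_i(ℓ) < 4, where X_i(ℓ) = ∑_{S⊆[r]∖{i}}(1-2|S|)exp(-ℓ^S) and Y_i(ℓ) = ∑_{S⊆[r]∖{i}}(1+2|S|)exp(-ℓ^S). -/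
/-- `F̄_r(ℓ) = ∑_{S⊆[r]} (1-2|S|) e^{-ℓ^S}`. -/
noncomputable def Fbar (r : ℕ) (ℓ : Fin r → ℝ) : ℝ :=
  ∑ S : Finset (Fin r), (1 - 2 * (S.card : ℝ)) * Real.exp (-(∑ i ∈ S, ℓ i))

/-- `X_i(ℓ) = ∑_{S ⊆ [r]∖{i}} (1-2|S|) e^{-ℓ^S}`. -/
noncomputable def Xfun (r : ℕ) (i : Fin r) (ℓ : Fin r → ℝ) : ℝ :=
  ∑ S ∈ (Finset.univ.erase i).powerset,
    (1 - 2 * (S.card : ℝ)) * Real.exp (-(∑ j ∈ S, ℓ j))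

/-- `Y_i(ℓ) = ∑_{S ⊆ [r]∖{i}} (1+2|S|) e^{-ℓ^S}`. -/
noncomputable def Yfun (r : ℕ) (i : Fin r) (ℓ : Fin r → ℝ) : ℝ :=
  ∑ S ∈ (Finset.univ.erase i).powerset,
    (1 + 2 * (S.card : ℝ)) * Real.exp (-(∑ j ∈ S, ℓ j))

/-!
Splitting the subsets of `[r]` according to whether they contain `i` gives
`F̄_r(ℓ) = X_i(ℓ) - e^{-ℓⁱ} Y_i(ℓ)`, so `F̄_r(ℓ) = 0` forces `X_i(ℓ) = e^{-ℓⁱ} Y_i(ℓ)`.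
In `X_i` and `Y_i` the empty set contributes `1` and every other set contributes a term of
sign `∓`, whence `X_i < 1 < Y_i`, and therefore `X_i > 0`. Finally
`Y_i + 3 X_i = ∑_S 4 (1 - |S|) e^{-ℓ^S} ≤ 4`, which with `X_i > 0` gives `Y_i < 4`.
-/

open Finset Real

namespace Finset

variable {α : Type*} [DecidableEq α] {s : Finset α} {f : Finset α → ℝ}

theorem sum_powerset_le_apply_empty (hf : ∀ S ⊆ s, S.Nonempty → f S ≤ 0) :
    ∑ S ∈ s.powerset, f S ≤ f ∅ := by
  rw [← add_sum_erase _ _ (empty_mem_powerset s)]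
  refine add_le_of_nonpos_right (sum_nonpos fun S hS => ?_)
  obtain ⟨hS, hSs⟩ := mem_erase.mp hS
  exact hf S (mem_powerset.mp hSs) (nonempty_iff_ne_empty.mpr hS)

theorem sum_powerset_lt_apply_empty (hs : s.Nonempty)
    (hf : ∀ S ⊆ s, S.Nonempty → f S < 0) : ∑ S ∈ s.powerset, f S < f ∅ := by
  rw [← add_sum_erase _ _ (empty_mem_powerset s)]
  refine add_lt_of_neg_right _ (sum_neg (fun S hS => ?_) ?_)
  · obtain ⟨hS, hSs⟩ := mem_erase.mp hS
    exact hf S (mem_powerset.mp hSs) (nonempty_iff_ne_empty.mpr hS)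
  · obtain ⟨a, ha⟩ := hs
    exact ⟨{a}, mem_erase.mpr ⟨singleton_ne_empty a, by simpa using ha⟩⟩

variable (ℓ : α → ℝ)

theorem sum_powerset_insert_one_sub_two_card_mul_exp {a : α} (ha : a ∉ s) :
    ∑ S ∈ (insert a s).powerset, (1 - 2 * (#S : ℝ)) * exp (-∑ j ∈ S, ℓ j) =
      ∑ S ∈ s.powerset, (1 - 2 * (#S : ℝ)) * exp (-∑ j ∈ S, ℓ j) -
        exp (-ℓ a) * ∑ S ∈ s.powerset, (1 + 2 * (#S : ℝ)) * exp (-∑ j ∈ S, ℓ j) := by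
  rw [sum_powerset_insert ha, sub_eq_add_neg, mul_sum, ← sum_neg_distrib]
  congr 1
  refine sum_congr rfl fun S hS => ?_
  have haS : a ∉ S := fun h => ha (mem_powerset.mp hS h)
  rw [card_insert_of_notMem haS, sum_insert haS, neg_add, exp_add]
  push_cast
  ring

theorem sum_powerset_one_sub_two_card_mul_exp_lt_one (hs : s.Nonempty) :
    ∑ S ∈ s.powerset, (1 - 2 * (#S : ℝ)) * exp (-∑ j ∈ S, ℓ j) < 1 := by
  refine (sum_powerset_lt_apply_empty hs fun S _ hS => ?_).trans_eq (by simp)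
  have : (1 : ℝ) ≤ #S := by exact_mod_cast hS.card_pos
  exact mul_neg_of_neg_of_pos (by linarith) (exp_pos _)

theorem one_lt_sum_powerset_one_add_two_card_mul_exp (hs : s.Nonempty) :
    1 < ∑ S ∈ s.powerset, (1 + 2 * (#S : ℝ)) * exp (-∑ j ∈ S, ℓ j) := by
  have := sum_powerset_lt_apply_empty hs
    (f := fun S => -((1 + 2 * (#S : ℝ)) * exp (-∑ j ∈ S, ℓ j))) fun S _ _ => by
      simp only [neg_lt_zero]; positivity
  simpa [sum_neg_distrib] using this

theorem sum_powerset_one_add_two_card_add_three_mul_le (s : Finset α) :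
    ∑ S ∈ s.powerset, (1 + 2 * (#S : ℝ)) * exp (-∑ j ∈ S, ℓ j) +
      3 * ∑ S ∈ s.powerset, (1 - 2 * (#S : ℝ)) * exp (-∑ j ∈ S, ℓ j) ≤ 4 := by
  have hsum : ∑ S ∈ s.powerset, 4 * (1 - (#S : ℝ)) * exp (-∑ j ∈ S, ℓ j) ≤ 4 :=
    (sum_powerset_le_apply_empty fun S _ hS => by
      have : (1 : ℝ) ≤ #S := by exact_mod_cast hS.card_pos
      exact mul_nonpos_of_nonpos_of_nonneg (by linarith) (exp_pos _).le).trans_eq (by simp)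
  refine le_of_eq_of_le ?_ hsum
  rw [mul_sum, ← sum_add_distrib]
  exact sum_congr rfl fun S _ => by ring

end Finset

theorem Fbar_eq_Xfun_sub_exp_mul_Yfun (r : ℕ) (i : Fin r) (ℓ : Fin r → ℝ) :
    Fbar r ℓ = Xfun r i ℓ - exp (-ℓ i) * Yfun r i ℓ := by
  rw [Fbar, ← powerset_univ, ← insert_erase (mem_univ i)]
  exact sum_powerset_insert_one_sub_two_card_mul_exp ℓ (notMem_erase i _)

theorem Xfun_Yfun_bounds_general (r : ℕ) (hr : 2 ≤ r) (i : Fin r) (ℓ : Fin r → ℝ)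
    (hF : Fbar r ℓ = 0) :
    0 < Xfun r i ℓ ∧ Xfun r i ℓ < 1 ∧ 1 < Yfun r i ℓ ∧ Yfun r i ℓ < 4 := by
  have : Nontrivial (Fin r) := Fin.nontrivial_iff_two_le.mpr hr
  have hne : (univ.erase i).Nonempty := (univ_nontrivial_iff.mpr this).erase_nonempty
  have hX1 : Xfun r i ℓ < 1 := sum_powerset_one_sub_two_card_mul_exp_lt_one ℓ hne
  have hY1 : 1 < Yfun r i ℓ := one_lt_sum_powerset_one_add_two_card_mul_exp ℓ hne
  have hXY : Xfun r i ℓ = exp (-ℓ i) * Yfun r i ℓ := by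
    rw [Fbar_eq_Xfun_sub_exp_mul_Yfun r i] at hF
    linarith
  have hX0 : 0 < Xfun r i ℓ := hXY ▸ mul_pos (exp_pos _) (by linarith)
  have hY4 : Yfun r i ℓ + 3 * Xfun r i ℓ ≤ 4 :=
    sum_powerset_one_add_two_card_add_three_mul_le ℓ _
  exact ⟨hX0, hX1, hY1, by linarith⟩

/-- For `ℓ` with positive entries and `F̄_r(ℓ) = 0`:
`0 < X_i(ℓ) < 1` and `1 < Y_i(ℓ) < 4`. -/
theorem Xfun_Yfun_bounds (r : ℕ) (hr : 2 ≤ r) (i : Fin r) (ℓ : Fin r → ℝ)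
    (hpos : ∀ j, 0 < ℓ j) (hF : Fbar r ℓ = 0) :
    0 < Xfun r i ℓ ∧ Xfun r i ℓ < 1 ∧ 1 < Yfun r i ℓ ∧ Yfun r i ℓ < 4 :=
  Xfun_Yfun_bounds_general r hr i ℓ hF
end

section
/- Let r ≥ 2 and suppose ℓ ∈ (0,∞)^r satisfies F̄_r(ℓ) = 0. If ℓⁱ ≤ ε for some index i and some ε > 0, then for every index j ≠ i one has ℓʲ > -log(exp(ε) - 1). -/
open Finset Real

theorem Finset.sum_powerset_one_sub_two_card_mul_prod {ι K : Type*} [DecidableEq ι] [Field K]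
    (s : Finset ι) (x : ι → K) (hx : ∀ k ∈ s, 1 + x k ≠ 0) :
    ∑ t ∈ s.powerset, (1 - 2 * (#t : K)) * ∏ k ∈ t, x k
      = (∏ k ∈ s, (1 + x k)) * (1 - 2 * ∑ k ∈ s, x k / (1 + x k)) := by
  induction s using Finset.induction_on with
  | empty => simp
  | insert a s ha ih =>
    have hxa : 1 + x a ≠ 0 := hx a (mem_insert_self a s)
    have h_insert : ∀ t ∈ s.powerset, (1 - 2 * (#(insert a t) : K)) * ∏ k ∈ insert a t, x k
        = x a * ((1 - 2 * (#t : K)) * ∏ k ∈ t, x k) - 2 * x a * ∏ k ∈ t, x k := by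
      intro t ht
      have hat : a ∉ t := fun h => ha (mem_powerset.mp ht h)
      rw [card_insert_of_notMem hat, prod_insert hat]
      push_cast
      ring
    rw [sum_powerset_insert ha, sum_congr rfl h_insert, sum_sub_distrib, ← mul_sum, ← mul_sum,
      ← prod_one_add, ih fun k hk => hx k (mem_insert_of_mem hk), prod_insert ha, sum_insert ha]
    field_simp
    ring

theorem Fbar_eq_prod_mul (r : ℕ) (ℓ : Fin r → ℝ) :
    Fbar r ℓ = (∏ k, (1 + exp (-ℓ k))) * (1 - 2 * ∑ k, (exp (ℓ k) + 1)⁻¹) := by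
  have h_term (k : Fin r) : exp (-ℓ k) / (1 + exp (-ℓ k)) = (exp (ℓ k) + 1)⁻¹ := by
    rw [exp_neg]
    field_simp
  simp_rw [← h_term]
  rw [← sum_powerset_one_sub_two_card_mul_prod _ _ fun k _ => by positivity, powerset_univ, Fbar]
  simp_rw [← sum_neg_distrib, exp_sum]

theorem sum_inv_exp_add_one_eq_half {r : ℕ} {ℓ : Fin r → ℝ} (hF : Fbar r ℓ = 0) :
    ∑ k, (exp (ℓ k) + 1)⁻¹ = 1 / 2 := by
  have hprod : ∏ k, (1 + exp (-ℓ k)) ≠ 0 := (prod_pos fun k _ => by positivity).ne'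
  rw [Fbar_eq_prod_mul, mul_eq_zero, or_iff_right hprod] at hF
  linarith

theorem inv_exp_add_one_add_inv_exp_add_one_le_half {r : ℕ} {ℓ : Fin r → ℝ} (hF : Fbar r ℓ = 0)
    {i j : Fin r} (hij : i ≠ j) :
    (exp (ℓ i) + 1)⁻¹ + (exp (ℓ j) + 1)⁻¹ ≤ 1 / 2 := by
  rw [← sum_inv_exp_add_one_eq_half hF, ← sum_pair (f := fun k => (exp (ℓ k) + 1)⁻¹) hij]
  exact sum_le_sum_of_subset_of_nonneg (subset_univ _) fun k _ _ => by positivity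

theorem inv_lt_sub_one_of_inv_add_one_add_inv_add_one_le_half {p q E : ℝ} (hp : 0 < p)
    (hq : 0 < q) (hpE : p ≤ E) (hE : 1 < E) (h : (p + 1)⁻¹ + (q + 1)⁻¹ ≤ 1 / 2) :
    q⁻¹ < E - 1 := by
  have hEp : (E + 1)⁻¹ ≤ (p + 1)⁻¹ := by gcongr
  have hq' : (q + 1)⁻¹ ≤ (E - 1) / (2 * (E + 1)) := by
    have : 1 / 2 - (E + 1)⁻¹ = (E - 1) / (2 * (E + 1)) := by field_simp; ring
    linarith
  rw [inv_eq_one_div, div_le_div_iff₀ (by positivity) (by positivity)] at hq'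
  rw [inv_lt_iff_one_lt_mul₀ hq]
  linarith

theorem short_edge_forces_long_general (r : ℕ) (ℓ : Fin r → ℝ)
    (hF : Fbar r ℓ = 0)
    (ε : ℝ) (hε : 0 < ε) (i : Fin r) (hi : ℓ i ≤ ε) :
    ∀ j : Fin r, j ≠ i → ℓ j > -Real.log (Real.exp ε - 1) := by
  intro j hji
  have hE : 1 < exp ε := one_lt_exp_iff.mpr hε
  have h := inv_lt_sub_one_of_inv_add_one_add_inv_add_one_le_half (exp_pos _) (exp_pos _)
    (exp_le_exp.mpr hi) hE (inv_exp_add_one_add_inv_exp_add_one_le_half hF hji.symm)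
  rw [← exp_neg] at h
  rw [gt_iff_lt, neg_lt, lt_log_iff_exp_lt (by linarith)]
  exact h

/-- If `F̄_r(ℓ) = 0` with positive lengths and `ℓⁱ ≤ ε`, then every other
length satisfies `ℓʲ > -log(e^ε - 1)`. -/
theorem short_edge_forces_long (r : ℕ) (hr : 2 ≤ r) (ℓ : Fin r → ℝ)
    (hpos : ∀ j, 0 < ℓ j) (hF : Fbar r ℓ = 0)
    (ε : ℝ) (hε : 0 < ε) (i : Fin r) (hi : ℓ i ≤ ε) :
    ∀ j : Fin r, j ≠ i → ℓ j > -Real.log (Real.exp ε - 1) :=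
  short_edge_forces_long_general r ℓ hF ε hε i hi
end
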